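/- Every nilpotent element x ∈ 𝔰𝔭_{2n}(k) is Sp_{2n}(k)-conjugate to an element of 𝔫: there exists g ∈ Sp_{2n}(k) with g·x·g⁻¹ of block form [[a,b],[0,ᵀa]] with a strictly upper triangular and ᵀb = b. Equivalently, the nilpotent cone of 𝔰𝔭_{2n}(k) equals ⋃_{g ∈ Sp_{2n}(k)} g·𝔫·g⁻¹. -/

import Mathlib

open Matrix

/-- The Gram matrix `J = [[0, 1ₙ], [1ₙ, 0]]` of the symplectic form. -/
def Jsp (k : Type*) [Field k] (n : ℕ) : Matrix (Fin n ⊕ Fin n) (Fin n ⊕ Fin n) k :=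
  Matrix.fromBlocks 0 1 1 0

/-!
In characteristic 2 the form `β(u, v) = (J u) ⬝ᵥ v` is alternating, so symplectic transvections
`v ↦ v + c β(u, v) u` act transitively on nonzero vectors. A nilpotent `x ∈ 𝔰𝔭` has a nonzero
kernel vector, which can thus be moved to `e₀`; then `x e₀ = 0`, and the `𝔰𝔭` condition forces the
`f₀`-row of `x` to vanish too. The compression of `x` to the span of the remaining `eᵢ, fᵢ` is a
nilpotent element of `𝔰𝔭_{2n-2}`, so by induction it is conjugate to a matrix that is strictly upper
triangular in the order `e₁, …, e_{n-1}, f_{n-1}, …, f₁`. Extending that conjugator by the identity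
on `e₀, f₀` makes `x` strictly upper triangular in the order `e₀, …, e_{n-1}, f_{n-1}, …, f₀`, and
for an element of `𝔰𝔭` this is exactly the shape `[[a, b], [0, aᵀ]]` with `a` strictly upper
triangular and `b` symmetric.
-/

namespace Matrix

variable {ι κ R : Type*}

def IsStrictlyUpperWrt [Zero R] (f : ι → ℕ) (M : Matrix ι ι R) : Prop :=
  ∀ p q, f q ≤ f p → M p q = 0

variable [Fintype ι]

theorem IsStrictlyUpperWrt.pow_eq_zero [DecidableEq ι] [Semiring R] {f : ι → ℕ}
    {M : Matrix ι ι R} (hM : M.IsStrictlyUpperWrt f) {N : ℕ} (hN : ∀ i, f i < N) : M ^ N = 0 := by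
  have key : ∀ m p q, f q < f p + m → (M ^ m) p q = 0 := by
    intro m
    induction m with
    | zero =>
      intro p q hpq
      exact one_apply_ne fun h => by subst h; omega
    | succ m ih =>
      intro p q hpq
      rw [pow_succ, mul_apply]
      refine Finset.sum_eq_zero fun r _ => ?_
      rcases lt_or_ge (f r) (f p + m) with hr | hr
      · rw [ih p r hr, zero_mul]
      · rw [hM r q (by omega), mul_zero]
  ext p q
  exact key N p q (by have := hN q; omega)

theorem submatrix_mul_of_notMem_range [Fintype κ] [NonUnitalNonAssocSemiring R] {f : κ → ι}
    (hf : Function.Injective f) (A B : Matrix ι ι R)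
    (h : ∀ p q r, r ∉ Set.range f → A (f p) r * B r (f q) = 0) :
    (A * B).submatrix f f = A.submatrix f f * B.submatrix f f := by
  ext p q
  exact (Fintype.sum_of_injective f hf _ _ (h p q) fun _ => rfl).symm

theorem isNilpotent_conj [DecidableEq ι] [CommRing R] {g x : Matrix ι ι R} (hg : IsUnit g)
    (hx : IsNilpotent x) : IsNilpotent (g * x * g⁻¹) := by
  obtain ⟨N, hN⟩ := hx
  refine ⟨N, ?_⟩
  rw [← hg.unit_spec, ← coe_units_inv, Units.conj_pow, hN, Matrix.mul_zero, Matrix.zero_mul]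

end Matrix

variable {k : Type*} [Field k] {n : ℕ}

theorem inv_mem_symplecticGroup {l R : Type*} [Fintype l] [DecidableEq l] [CommRing R]
    {g : Matrix (l ⊕ l) (l ⊕ l) R} (hg : g ∈ symplecticGroup l R) :
    g⁻¹ ∈ symplecticGroup l R := by
  simpa [SymplecticGroup.coe_inv'] using (⟨g, hg⟩⁻¹ : symplecticGroup l R).2

theorem isUnit_of_mem_symplecticGroup {l R : Type*} [Fintype l] [DecidableEq l] [CommRing R]
    {g : Matrix (l ⊕ l) (l ⊕ l) R} (hg : g ∈ symplecticGroup l R) : IsUnit g :=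
  (isUnit_iff_isUnit_det g).mpr (SymplecticGroup.symplectic_det hg)

theorem Jsp_mulVec_apply (u : Fin n ⊕ Fin n → k) (p : Fin n ⊕ Fin n) :
    (Jsp k n *ᵥ u) p = u p.swap := by
  rcases p with i | i <;> simp [Jsp, fromBlocks_mulVec]

theorem Jsp_mul_apply (M : Matrix (Fin n ⊕ Fin n) (Fin n ⊕ Fin n) k) (p q : Fin n ⊕ Fin n) :
    (Jsp k n * M) p q = M p.swap q := by
  rcases p with i | i <;> simp [Jsp, mul_apply, fromBlocks, one_apply]

theorem Jsp_transpose : (Jsp k n)ᵀ = Jsp k n := by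
  simp [Jsp, fromBlocks_transpose]

theorem Jsp_mul_Jsp : Jsp k n * Jsp k n = 1 := by
  simp [Jsp, fromBlocks_multiply]

def IsSymplecticLie (x : Matrix (Fin n ⊕ Fin n) (Fin n ⊕ Fin n) k) : Prop :=
  xᵀ * Jsp k n = Jsp k n * x

theorem isSymplecticLie_iff_apply {x : Matrix (Fin n ⊕ Fin n) (Fin n ⊕ Fin n) k} :
    IsSymplecticLie x ↔ ∀ p q, x q.swap p = x p.swap q := by
  have h : xᵀ * Jsp k n = (Jsp k n * x)ᵀ := by rw [transpose_mul, Jsp_transpose]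
  rw [IsSymplecticLie, h, ← Matrix.ext_iff]
  simp only [transpose_apply, Jsp_mul_apply]

theorem IsSymplecticLie.row_inr_eq_zero {x : Matrix (Fin n ⊕ Fin n) (Fin n ⊕ Fin n) k}
    (hx : IsSymplecticLie x) {i : Fin n} (hi : x.col (.inl i) = 0) : x.row (.inr i) = 0 := by
  funext q
  exact (isSymplecticLie_iff_apply.mp hx (.inl i) q).symm.trans (congrFun hi q.swap)

theorem isSymplecticLie_fromBlocks {a b : Matrix (Fin n) (Fin n) k} (hb : bᵀ = b) :
    IsSymplecticLie (fromBlocks a b 0 aᵀ) := by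
  simp [IsSymplecticLie, Jsp, fromBlocks_transpose, fromBlocks_multiply, hb]

def spForm (u v : Fin n ⊕ Fin n → k) : k :=
  (Jsp k n *ᵥ u) ⬝ᵥ v

theorem spForm_comm (u v : Fin n ⊕ Fin n → k) : spForm u v = spForm v u := by
  rw [spForm, spForm, dotProduct_comm, dotProduct_mulVec, ← mulVec_transpose, Jsp_transpose]

theorem exists_spForm_ne_zero {v : Fin n ⊕ Fin n → k} (hv : v ≠ 0) : ∃ z, spForm z v ≠ 0 := by
  obtain ⟨p, hp⟩ := Function.ne_iff.mp hv
  refine ⟨Jsp k n *ᵥ Pi.single p 1, ?_⟩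
  rwa [spForm, mulVec_mulVec, Jsp_mul_Jsp, one_mulVec, single_dotProduct, one_mul]

def symplecticTransvection (u : Fin n ⊕ Fin n → k) (c : k) :
    Matrix (Fin n ⊕ Fin n) (Fin n ⊕ Fin n) k :=
  1 + c • vecMulVec u (Jsp k n *ᵥ u)

theorem symplecticTransvection_mulVec (u : Fin n ⊕ Fin n → k) (c : k) (v : Fin n ⊕ Fin n → k) :
    symplecticTransvection u c *ᵥ v = v + (c * spForm u v) • u := by
  rw [symplecticTransvection, add_mulVec, one_mulVec, smul_mulVec, vecMulVec_mulVec,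
    op_smul_eq_smul, smul_smul, spForm]

-- the position of a basis vector in the ordering `e₀, …, e_{n-1}, f_{n-1}, …, f₀`
def flagIndex : Fin n ⊕ Fin n → ℕ :=
  Sum.elim (fun i => i) (fun i => 2 * n - 1 - i)

theorem flagIndex_lt (p : Fin n ⊕ Fin n) : flagIndex p < 2 * n := by
  rcases p with i | i <;> simp only [flagIndex, Sum.elim_inl, Sum.elim_inr] <;> omega

def succEmb : Fin n ⊕ Fin n → Fin (n + 1) ⊕ Fin (n + 1) :=
  Sum.map Fin.succ Fin.succ

theorem succEmb_injective : Function.Injective (succEmb (n := n)) :=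
  Sum.map_injective.mpr ⟨Fin.succ_injective _, Fin.succ_injective _⟩

theorem succEmb_swap (p : Fin n ⊕ Fin n) : succEmb p.swap = (succEmb p).swap := by
  rcases p with i | i <;> rfl

theorem flagIndex_succEmb (p : Fin n ⊕ Fin n) : flagIndex (succEmb p) = flagIndex p + 1 := by
  rcases p with i | i
  · rfl
  · simp only [flagIndex, succEmb, Sum.map_inr, Sum.elim_inr, Fin.val_succ]
    omega

theorem eq_zero_or_mem_range_succEmb (r : Fin (n + 1) ⊕ Fin (n + 1)) :
    r = .inl 0 ∨ r = .inr 0 ∨ r ∈ Set.range succEmb := by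
  rcases r with i | i <;> cases i using Fin.cases
  · exact .inl rfl
  · exact .inr (.inr ⟨.inl _, rfl⟩)
  · exact .inr (.inl rfl)
  · exact .inr (.inr ⟨.inr _, rfl⟩)

def peelEquiv (n : ℕ) : Fin (n + 1) ⊕ Fin (n + 1) ≃ (Fin n ⊕ Fin n) ⊕ (Fin 1 ⊕ Fin 1) where
  toFun := Sum.elim
    (Fin.cases (.inr (.inl 0)) fun j => .inl (.inl j))
    (Fin.cases (.inr (.inr 0)) fun j => .inl (.inr j))
  invFun := Sum.elim (Sum.map Fin.succ Fin.succ) (Sum.elim (fun _ => .inl 0) fun _ => .inr 0)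
  left_inv := by
    rintro (i | i) <;> cases i using Fin.cases <;> simp
  right_inv := by
    rintro ((j | j) | (u | u)) <;> simp [Fin.fin_one_eq_zero]

@[simp]
theorem peelEquiv_inl_zero : peelEquiv n (.inl 0) = .inr (.inl 0) := rfl

@[simp]
theorem peelEquiv_inr_zero : peelEquiv n (.inr 0) = .inr (.inr 0) := rfl

@[simp]
theorem peelEquiv_inl_succ (i : Fin n) : peelEquiv n (.inl i.succ) = .inl (.inl i) := rfl

@[simp]
theorem peelEquiv_inr_succ (i : Fin n) : peelEquiv n (.inr i.succ) = .inl (.inr i) := rfl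

@[simp]
theorem peelEquiv_succEmb (p : Fin n ⊕ Fin n) : peelEquiv n (succEmb p) = .inl p := by
  rcases p with j | j <;> rfl

theorem Jsp_succ : Jsp k (n + 1) =
    (fromBlocks (Jsp k n) 0 0 (Jsp k 1)).submatrix (peelEquiv n) (peelEquiv n) := by
  ext (i | i) (j | j) <;> cases i using Fin.cases <;> cases j using Fin.cases <;>
    simp [Jsp, peelEquiv, fromBlocks, one_apply, Fin.succ_ne_zero, (Fin.succ_ne_zero _).symm]

def extendSp (A : Matrix (Fin n ⊕ Fin n) (Fin n ⊕ Fin n) k) :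
    Matrix (Fin (n + 1) ⊕ Fin (n + 1)) (Fin (n + 1) ⊕ Fin (n + 1)) k :=
  (fromBlocks A 0 0 1).submatrix (peelEquiv n) (peelEquiv n)

theorem extendSp_mul (A B : Matrix (Fin n ⊕ Fin n) (Fin n ⊕ Fin n) k) :
    extendSp A * extendSp B = extendSp (A * B) := by
  rw [extendSp, extendSp, submatrix_mul_equiv, fromBlocks_multiply]
  simp [extendSp]

theorem extendSp_one : extendSp (1 : Matrix (Fin n ⊕ Fin n) (Fin n ⊕ Fin n) k) = 1 := by
  rw [extendSp, fromBlocks_one, submatrix_one_equiv]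

theorem inv_extendSp {A : Matrix (Fin n ⊕ Fin n) (Fin n ⊕ Fin n) k} (hA : IsUnit A.det) :
    (extendSp A)⁻¹ = extendSp A⁻¹ :=
  inv_eq_right_inv (by rw [extendSp_mul, mul_nonsing_inv _ hA, extendSp_one])

theorem submatrix_extendSp (A : Matrix (Fin n ⊕ Fin n) (Fin n ⊕ Fin n) k) :
    (extendSp A).submatrix succEmb succEmb = A := by
  ext p q
  simp [extendSp]

theorem extendSp_succEmb_apply {A : Matrix (Fin n ⊕ Fin n) (Fin n ⊕ Fin n) k}
    (p : Fin n ⊕ Fin n) {r : Fin (n + 1) ⊕ Fin (n + 1)} (hr : r ∉ Set.range succEmb) :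
    extendSp A (succEmb p) r = 0 := by
  rcases eq_zero_or_mem_range_succEmb r with rfl | rfl | hr' <;> simp_all [extendSp]

theorem extendSp_apply_succEmb {A : Matrix (Fin n ⊕ Fin n) (Fin n ⊕ Fin n) k}
    (q : Fin n ⊕ Fin n) {r : Fin (n + 1) ⊕ Fin (n + 1)} (hr : r ∉ Set.range succEmb) :
    extendSp A r (succEmb q) = 0 := by
  rcases eq_zero_or_mem_range_succEmb r with rfl | rfl | hr' <;> simp_all [extendSp]

theorem extendSp_mulVec_single (A : Matrix (Fin n ⊕ Fin n) (Fin n ⊕ Fin n) k) :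
    extendSp A *ᵥ Pi.single (.inl 0) 1 = Pi.single (.inl 0) 1 := by
  rw [mulVec_single_one]
  funext r
  rcases eq_zero_or_mem_range_succEmb r with rfl | rfl | ⟨_ | _, rfl⟩ <;>
    simp [extendSp, one_apply, succEmb]

theorem IsSymplecticLie.submatrix_succEmb
    {x : Matrix (Fin (n + 1) ⊕ Fin (n + 1)) (Fin (n + 1) ⊕ Fin (n + 1)) k}
    (hx : IsSymplecticLie x) : IsSymplecticLie (x.submatrix succEmb succEmb) := by
  rw [isSymplecticLie_iff_apply] at hx ⊢
  intro p q
  simp only [submatrix_apply, succEmb_swap, hx]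

theorem isNilpotent_submatrix_succEmb
    {x : Matrix (Fin (n + 1) ⊕ Fin (n + 1)) (Fin (n + 1) ⊕ Fin (n + 1)) k}
    (hcol : x.col (.inl 0) = 0) (hrow : x.row (.inr 0) = 0) (hx : IsNilpotent x) :
    IsNilpotent (x.submatrix succEmb succEmb) := by
  have hpow_col : ∀ m s, (x ^ (m + 1)) s (.inl 0) = 0 := fun m s => by
    rw [pow_succ, ← col_apply (x ^ m * x), ← mulVec_single_one, ← mulVec_mulVec,
      mulVec_single_one, hcol, mulVec_zero, Pi.zero_apply]
  have hpow : ∀ m,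
      (x ^ (m + 1)).submatrix succEmb succEmb = x.submatrix succEmb succEmb ^ (m + 1) := by
    intro m
    induction m with
    | zero => rw [pow_one, pow_one]
    | succ m ih =>
      rw [pow_succ x, submatrix_mul_of_notMem_range succEmb_injective, ih, ← pow_succ]
      intro p q r hr
      rcases eq_zero_or_mem_range_succEmb r with rfl | rfl | hr'
      · rw [hpow_col, zero_mul]
      · rw [← row_apply x, hrow, Pi.zero_apply, mul_zero]
      · exact absurd hr' hr
  obtain ⟨N, hN⟩ := hx
  exact ⟨N + 1, by rw [← hpow, pow_succ, hN, Matrix.zero_mul]; rfl⟩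

theorem isStrictlyUpperWrt_flagIndex_of_submatrix
    {y : Matrix (Fin (n + 1) ⊕ Fin (n + 1)) (Fin (n + 1) ⊕ Fin (n + 1)) k}
    (hcol : y.col (.inl 0) = 0) (hrow : y.row (.inr 0) = 0)
    (h : (y.submatrix succEmb succEmb).IsStrictlyUpperWrt flagIndex) :
    y.IsStrictlyUpperWrt flagIndex := by
  have h_inl : flagIndex (.inl 0 : Fin (n + 1) ⊕ Fin (n + 1)) = 0 := rfl
  have h_inr : flagIndex (.inr 0 : Fin (n + 1) ⊕ Fin (n + 1)) = 2 * n + 1 := by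
    simp only [flagIndex, Sum.elim_inr, Fin.val_zero]; omega
  intro p q hpq
  rcases eq_zero_or_mem_range_succEmb q with rfl | rfl | ⟨q, rfl⟩
  · exact congrFun hcol p
  · rcases eq_zero_or_mem_range_succEmb p with rfl | rfl | ⟨p, rfl⟩
    · rw [h_inl, h_inr] at hpq; omega
    · exact congrFun hrow _
    · rw [flagIndex_succEmb, h_inr] at hpq; have := flagIndex_lt p; omega
  · rcases eq_zero_or_mem_range_succEmb p with rfl | rfl | ⟨p, rfl⟩
    · rw [h_inl, flagIndex_succEmb] at hpq; omega
    · exact congrFun hrow _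
    · rw [flagIndex_succEmb, flagIndex_succEmb] at hpq; exact h p q (by omega)

theorem isStrictlyUpperWrt_fromBlocks {a : Matrix (Fin n) (Fin n) k}
    (ha : ∀ i j : Fin n, (j : ℕ) ≤ i → a i j = 0) (b : Matrix (Fin n) (Fin n) k) :
    (fromBlocks a b 0 aᵀ).IsStrictlyUpperWrt flagIndex := by
  rintro (i | i) (j | j) h <;> simp only [flagIndex, Sum.elim_inl, Sum.elim_inr] at h
  · exact ha i j h
  · omega
  · rfl
  · exact ha j i (by omega)

theorem IsSymplecticLie.exists_eq_fromBlocks {y : Matrix (Fin n ⊕ Fin n) (Fin n ⊕ Fin n) k}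
    (hy : IsSymplecticLie y) (htri : y.IsStrictlyUpperWrt flagIndex) :
    ∃ a b : Matrix (Fin n) (Fin n) k, (∀ i j : Fin n, (j : ℕ) ≤ i → a i j = 0) ∧ bᵀ = b ∧
      y = fromBlocks a b 0 aᵀ := by
  rw [isSymplecticLie_iff_apply] at hy
  refine ⟨y.toBlocks₁₁, y.toBlocks₁₂, fun i j h => htri _ _ h, ?_, ?_⟩
  · ext i j
    exact hy (.inr i) (.inr j)
  · conv_lhs => rw [← fromBlocks_toBlocks y]
    congr 1
    · ext i j
      exact htri _ _ (by simp only [flagIndex, Sum.elim_inl, Sum.elim_inr]; omega)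
    · ext i j
      exact hy (.inr j) (.inl i)

section CharTwo

variable [CharP k 2]

theorem Jsp_eq_J : Jsp k n = J (Fin n) k := by
  have h : (-1 : Matrix (Fin n) (Fin n) k) = 1 := by
    ext i j
    rw [neg_apply, CharTwo.neg_eq]
  rw [J, Jsp, h]

theorem mem_symplecticGroup_iff {g : Matrix (Fin n ⊕ Fin n) (Fin n ⊕ Fin n) k} :
    g ∈ symplecticGroup (Fin n) k ↔ gᵀ * Jsp k n * g = Jsp k n := by
  rw [SymplecticGroup.mem_iff', Jsp_eq_J]

theorem transpose_mul_Jsp_of_mem {g : Matrix (Fin n ⊕ Fin n) (Fin n ⊕ Fin n) k}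
    (hg : g ∈ symplecticGroup (Fin n) k) : gᵀ * Jsp k n = Jsp k n * g⁻¹ := by
  have hdet := (isUnit_iff_isUnit_det g).mp (isUnit_of_mem_symplecticGroup hg)
  calc gᵀ * Jsp k n = gᵀ * Jsp k n * g * g⁻¹ := by
        rw [Matrix.mul_assoc _ g, mul_nonsing_inv _ hdet, Matrix.mul_one]
    _ = Jsp k n * g⁻¹ := by rw [mem_symplecticGroup_iff.mp hg]

theorem IsSymplecticLie.conj {g x : Matrix (Fin n ⊕ Fin n) (Fin n ⊕ Fin n) k}
    (hg : g ∈ symplecticGroup (Fin n) k) (hx : IsSymplecticLie x) :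
    IsSymplecticLie (g * x * g⁻¹) := by
  have hdet := (isUnit_iff_isUnit_det g).mp (isUnit_of_mem_symplecticGroup hg)
  have hg' : g⁻¹ᵀ * Jsp k n = Jsp k n * g := by
    rw [transpose_mul_Jsp_of_mem (inv_mem_symplecticGroup hg), nonsing_inv_nonsing_inv _ hdet]
  calc (g * x * g⁻¹)ᵀ * Jsp k n = g⁻¹ᵀ * xᵀ * (gᵀ * Jsp k n) := by
        simp only [transpose_mul, Matrix.mul_assoc]
    _ = g⁻¹ᵀ * (xᵀ * Jsp k n) * g⁻¹ := by
        rw [transpose_mul_Jsp_of_mem hg]; simp only [Matrix.mul_assoc]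
    _ = g⁻¹ᵀ * Jsp k n * x * g⁻¹ := by
        rw [show xᵀ * Jsp k n = Jsp k n * x from hx]; simp only [Matrix.mul_assoc]
    _ = Jsp k n * (g * x * g⁻¹) := by rw [hg']; simp only [Matrix.mul_assoc]

theorem spForm_self (u : Fin n ⊕ Fin n → k) : spForm u u = 0 := by
  simp only [spForm, dotProduct, Jsp_mulVec_apply, Fintype.sum_sum_type, Sum.swap_inl,
    Sum.swap_inr, mul_comm (u (Sum.inr _)), CharTwo.add_self_eq_zero]

theorem symplecticTransvection_mem (u : Fin n ⊕ Fin n → k) (c : k) :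
    symplecticTransvection u c ∈ symplecticGroup (Fin n) k := by
  set W := vecMulVec (Jsp k n *ᵥ u) (Jsp k n *ᵥ u)
  have hTJ : (symplecticTransvection u c)ᵀ * Jsp k n = Jsp k n + c • W := by
    rw [symplecticTransvection, transpose_add, transpose_one, transpose_smul, transpose_vecMulVec,
      add_mul, Matrix.one_mul, Matrix.smul_mul, vecMulVec_mul, ← mulVec_transpose, Jsp_transpose]
  have hJV : Jsp k n * vecMulVec u (Jsp k n *ᵥ u) = W := mul_vecMulVec _ _ _
  have hWV : W * vecMulVec u (Jsp k n *ᵥ u) = 0 := by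
    rw [vecMulVec_mul_vecMulVec, ← spForm, spForm_self, zero_smul]
    ext; simp
  rw [mem_symplecticGroup_iff, hTJ, symplecticTransvection, mul_add, add_mul, add_mul,
    Matrix.mul_one, Matrix.mul_one, Matrix.mul_smul, Matrix.mul_smul, Matrix.smul_mul, hJV, hWV,
    smul_zero, smul_zero, add_zero, add_assoc, ← add_smul, CharTwo.add_self_eq_zero, zero_smul,
    add_zero]

theorem exists_symplecticTransvection_mulVec_eq {v w : Fin n ⊕ Fin n → k} (h : spForm w v ≠ 0) :
    ∃ g ∈ symplecticGroup (Fin n) k, g *ᵥ v = w := by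
  refine ⟨symplecticTransvection (w + v) (spForm w v)⁻¹, symplecticTransvection_mem _ _, ?_⟩
  have hform : spForm (w + v) v = spForm w v := by
    rw [spForm, mulVec_add, add_dotProduct, ← spForm, ← spForm, spForm_self, add_zero]
  rw [symplecticTransvection_mulVec, hform, inv_mul_cancel₀ h, one_smul]
  funext p
  rw [Pi.add_apply, Pi.add_apply, add_left_comm, CharTwo.add_self_eq_zero, add_zero]

theorem exists_mem_symplecticGroup_mulVec_eq {v w : Fin n ⊕ Fin n → k} (hv : v ≠ 0)
    (hw : w ≠ 0) : ∃ g ∈ symplecticGroup (Fin n) k, g *ᵥ v = w := by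
  by_cases h : spForm w v ≠ 0
  · exact exists_symplecticTransvection_mulVec_eq h
  obtain ⟨z, hzv, hwz⟩ : ∃ z, spForm z v ≠ 0 ∧ spForm w z ≠ 0 := by
    obtain ⟨z₁, hz₁⟩ := exists_spForm_ne_zero hv
    obtain ⟨z₂, hz₂⟩ := exists_spForm_ne_zero hw
    rw [spForm_comm] at hz₂
    by_cases h₁ : spForm w z₁ ≠ 0
    · exact ⟨z₁, hz₁, h₁⟩
    by_cases h₂ : spForm z₂ v ≠ 0
    · exact ⟨z₂, h₂, hz₂⟩
    refine ⟨z₁ + z₂, ?_, ?_⟩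
    · rwa [spForm, mulVec_add, add_dotProduct, ← spForm, ← spForm, not_not.mp h₂, add_zero]
    · rwa [spForm, dotProduct_add, ← spForm, ← spForm, not_not.mp h₁, zero_add]
  obtain ⟨g₁, hg₁, rfl⟩ := exists_symplecticTransvection_mulVec_eq hzv
  obtain ⟨g₂, hg₂, rfl⟩ := exists_symplecticTransvection_mulVec_eq hwz
  exact ⟨g₂ * g₁, mul_mem hg₂ hg₁, (mulVec_mulVec _ _ _).symm⟩

theorem extendSp_mem {A : Matrix (Fin n ⊕ Fin n) (Fin n ⊕ Fin n) k}
    (hA : A ∈ symplecticGroup (Fin n) k) : extendSp A ∈ symplecticGroup (Fin (n + 1)) k := by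
  rw [mem_symplecticGroup_iff, Jsp_succ, extendSp, transpose_submatrix, submatrix_mul_equiv,
    submatrix_mul_equiv, fromBlocks_transpose, fromBlocks_multiply, fromBlocks_multiply]
  simp [mem_symplecticGroup_iff.mp hA]

theorem isStrictlyUpperWrt_extendSp_conj
    {x : Matrix (Fin (n + 1) ⊕ Fin (n + 1)) (Fin (n + 1) ⊕ Fin (n + 1)) k}
    {g : Matrix (Fin n ⊕ Fin n) (Fin n ⊕ Fin n) k} (hx : IsSymplecticLie x)
    (hcol : x.col (.inl 0) = 0) (hg : g ∈ symplecticGroup (Fin n) k)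
    (h : (g * x.submatrix succEmb succEmb * g⁻¹).IsStrictlyUpperWrt flagIndex) :
    (extendSp g * x * (extendSp g)⁻¹).IsStrictlyUpperWrt flagIndex := by
  have hdet := (isUnit_iff_isUnit_det g).mp (isUnit_of_mem_symplecticGroup hg)
  rw [inv_extendSp hdet]
  have hycol : (extendSp g * x * extendSp g⁻¹).col (.inl 0) = 0 := by
    rw [← mulVec_single_one, ← mulVec_mulVec, extendSp_mulVec_single, ← mulVec_mulVec,
      mulVec_single_one, hcol, mulVec_zero]
  have hy : IsSymplecticLie (extendSp g * x * extendSp g⁻¹) := by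
    simpa only [inv_extendSp hdet] using hx.conj (extendSp_mem hg)
  refine isStrictlyUpperWrt_flagIndex_of_submatrix hycol (hy.row_inr_eq_zero hycol) ?_
  rwa [Matrix.mul_assoc, submatrix_mul_of_notMem_range succEmb_injective,
    submatrix_mul_of_notMem_range succEmb_injective, submatrix_extendSp, submatrix_extendSp,
    ← Matrix.mul_assoc]
  · intro p q r hr
    rw [extendSp_apply_succEmb q hr, mul_zero]
  · intro p q r hr
    rw [extendSp_succEmb_apply p hr, zero_mul]

theorem exists_mem_symplecticGroup_conj_isStrictlyUpperWrt :
    ∀ (n : ℕ) (x : Matrix (Fin n ⊕ Fin n) (Fin n ⊕ Fin n) k), IsSymplecticLie x →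
      IsNilpotent x → ∃ g ∈ symplecticGroup (Fin n) k,
        (g * x * g⁻¹).IsStrictlyUpperWrt flagIndex
  | 0, _, _, _ => ⟨1, one_mem _, fun p => p.elim Fin.elim0 Fin.elim0⟩
  | n + 1, x, hx, hnil => by
    have hdet : x.det = 0 := by
      simpa [isUnit_iff_ne_zero] using (isUnit_iff_isUnit_det x).not.mp hnil.not_isUnit
    obtain ⟨v, hv, hxv⟩ := exists_mulVec_eq_zero_iff.mpr hdet
    obtain ⟨g₁, hg₁, hg₁v⟩ := exists_mem_symplecticGroup_mulVec_eq hv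
      (Pi.single_ne_zero_iff.mpr one_ne_zero : Pi.single (.inl 0) (1 : k) ≠ 0)
    have hdet₁ := (isUnit_iff_isUnit_det g₁).mp (isUnit_of_mem_symplecticGroup hg₁)
    set x₁ := g₁ * x * g₁⁻¹
    have hx₁ : IsSymplecticLie x₁ := hx.conj hg₁
    have hcol : x₁.col (.inl 0) = 0 := by
      rw [← mulVec_single_one, ← hg₁v, mulVec_mulVec, Matrix.mul_assoc, nonsing_inv_mul _ hdet₁,
        Matrix.mul_one, ← mulVec_mulVec, hxv, mulVec_zero]
    obtain ⟨g, hg, htri⟩ := exists_mem_symplecticGroup_conj_isStrictlyUpperWrt n _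
      hx₁.submatrix_succEmb <| isNilpotent_submatrix_succEmb hcol (hx₁.row_inr_eq_zero hcol)
        (isNilpotent_conj (isUnit_of_mem_symplecticGroup hg₁) hnil)
    refine ⟨extendSp g * g₁, mul_mem (extendSp_mem hg) hg₁, ?_⟩
    have hconj :
        extendSp g * g₁ * x * (extendSp g * g₁)⁻¹ = extendSp g * x₁ * (extendSp g)⁻¹ := by
      simp only [x₁, Matrix.mul_inv_rev, Matrix.mul_assoc]
    rw [hconj]
    exact isStrictlyUpperWrt_extendSp_conj hx₁ hcol hg htri

theorem exists_mem_symplecticGroup_conj_eq_fromBlocks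
    {x : Matrix (Fin n ⊕ Fin n) (Fin n ⊕ Fin n) k} (hx : IsSymplecticLie x)
    (hnil : IsNilpotent x) : ∃ g ∈ symplecticGroup (Fin n) k, ∃ a b : Matrix (Fin n) (Fin n) k,
      (∀ i j : Fin n, (j : ℕ) ≤ i → a i j = 0) ∧ bᵀ = b ∧ g * x * g⁻¹ = fromBlocks a b 0 aᵀ := by
  obtain ⟨g, hg, htri⟩ := exists_mem_symplecticGroup_conj_isStrictlyUpperWrt n x hx hnil
  exact ⟨g, hg, (hx.conj hg).exists_eq_fromBlocks htri⟩

end CharTwo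

theorem stmt_14_general (k : Type) [Field k] [CharP k 2] (n : ℕ) :
    (∀ x : Matrix (Fin n ⊕ Fin n) (Fin n ⊕ Fin n) k,
      xᵀ * Jsp k n = Jsp k n * x → IsNilpotent x →
      ∃ (g : Matrix (Fin n ⊕ Fin n) (Fin n ⊕ Fin n) k) (a b : Matrix (Fin n) (Fin n) k),
        IsUnit g ∧ gᵀ * Jsp k n * g = Jsp k n ∧
        (∀ i j : Fin n, (j : ℕ) ≤ (i : ℕ) → a i j = 0) ∧ bᵀ = b ∧
        g * x * g⁻¹ = Matrix.fromBlocks a b 0 aᵀ) ∧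
    {x : Matrix (Fin n ⊕ Fin n) (Fin n ⊕ Fin n) k |
      ∃ (g : Matrix (Fin n ⊕ Fin n) (Fin n ⊕ Fin n) k) (a b : Matrix (Fin n) (Fin n) k),
        IsUnit g ∧ gᵀ * Jsp k n * g = Jsp k n ∧
        (∀ i j : Fin n, (j : ℕ) ≤ (i : ℕ) → a i j = 0) ∧ bᵀ = b ∧
        x = g * Matrix.fromBlocks a b 0 aᵀ * g⁻¹}
      = {x : Matrix (Fin n ⊕ Fin n) (Fin n ⊕ Fin n) k |
          xᵀ * Jsp k n = Jsp k n * x ∧ IsNilpotent x} := by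
  refine ⟨fun x hx hnil => ?_, Set.ext fun x => ⟨?_, ?_⟩⟩
  · obtain ⟨g, hg, a, b, ha, hb, hy⟩ := exists_mem_symplecticGroup_conj_eq_fromBlocks hx hnil
    exact ⟨g, a, b, isUnit_of_mem_symplecticGroup hg, mem_symplecticGroup_iff.mp hg, ha, hb, hy⟩
  · rintro ⟨g, a, b, hgu, hg, ha, hb, rfl⟩
    exact ⟨(isSymplecticLie_fromBlocks hb).conj (mem_symplecticGroup_iff.mpr hg),
      isNilpotent_conj hgu ⟨_, (isStrictlyUpperWrt_fromBlocks ha b).pow_eq_zero flagIndex_lt⟩⟩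
  · rintro ⟨hx, hnil⟩
    obtain ⟨g, hg, a, b, ha, hb, hy⟩ := exists_mem_symplecticGroup_conj_eq_fromBlocks hx hnil
    have hg' := inv_mem_symplecticGroup hg
    have hdet := (isUnit_iff_isUnit_det g).mp (isUnit_of_mem_symplecticGroup hg)
    refine ⟨g⁻¹, a, b, isUnit_of_mem_symplecticGroup hg', mem_symplecticGroup_iff.mp hg', ha, hb,
      ?_⟩
    rw [← hy, nonsing_inv_nonsing_inv _ hdet, ← Matrix.mul_assoc, ← Matrix.mul_assoc,
      nonsing_inv_mul _ hdet, Matrix.one_mul, Matrix.mul_assoc, nonsing_inv_mul _ hdet,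
      Matrix.mul_one]

/-- Every nilpotent element of `𝔰𝔭_{2n}(k)` is `Sp_{2n}(k)`-conjugate to an
element of `𝔫 = {[[a,b],[0,aᵀ]] : a strictly upper triangular, bᵀ = b}`; equivalently the
nilpotent cone of `𝔰𝔭_{2n}(k)` equals `⋃_{g ∈ Sp_{2n}(k)} g·𝔫·g⁻¹`. -/
theorem stmt_14 (k : Type) [Field k] [IsAlgClosed k] [CharP k 2] (n : ℕ) (hn : 1 ≤ n) :
    (∀ x : Matrix (Fin n ⊕ Fin n) (Fin n ⊕ Fin n) k,
      xᵀ * Jsp k n = Jsp k n * x → IsNilpotent x →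
      ∃ (g : Matrix (Fin n ⊕ Fin n) (Fin n ⊕ Fin n) k) (a b : Matrix (Fin n) (Fin n) k),
        IsUnit g ∧ gᵀ * Jsp k n * g = Jsp k n ∧
        (∀ i j : Fin n, (j : ℕ) ≤ (i : ℕ) → a i j = 0) ∧ bᵀ = b ∧
        g * x * g⁻¹ = Matrix.fromBlocks a b 0 aᵀ) ∧
    {x : Matrix (Fin n ⊕ Fin n) (Fin n ⊕ Fin n) k |
      ∃ (g : Matrix (Fin n ⊕ Fin n) (Fin n ⊕ Fin n) k) (a b : Matrix (Fin n) (Fin n) k),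
        IsUnit g ∧ gᵀ * Jsp k n * g = Jsp k n ∧
        (∀ i j : Fin n, (j : ℕ) ≤ (i : ℕ) → a i j = 0) ∧ bᵀ = b ∧
        x = g * Matrix.fromBlocks a b 0 aᵀ * g⁻¹}
      = {x : Matrix (Fin n ⊕ Fin n) (Fin n ⊕ Fin n) k |
          xᵀ * Jsp k n = Jsp k n * x ∧ IsNilpotent x} :=
  stmt_14_general k n
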